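/- (Scaling: finite K, increasing M) Let K ≥ 1 be a fixed integer, let P > 0, and let s be real. For each integer M ≥ 1 let X_(1)^{(M)} be the minimum of K i.i.d. Gamma(M,1) random variables. Then lim_{M→∞} E[(1 + (P/M)·X_(1)^{(M)})^{s−1}] = (1+P)^{s−1}. -/

import Mathlib

/-!
For `X ~ Gamma(M, 1)` the moment generating function is `(1 - c)⁻ᴹ`, and Chernoff's bound at the
optimal parameter gives `P(X ≥ xM), P(X ≤ xM) ≤ (x e^{1-x})^M` on the relevant sides of `x = 1`,
which decays geometrically since `x e^{1-x} < 1` for `x ≠ 1`. Hence each `X_k / M`, and by the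
union bound also `min_k X_k / M`, tends to `1` in probability, so the integrand tends to
`(1 + P)^(s-1)` in probability. The integrand is at most `exp(|s-1| P min_k X_k / M)`, whose second
moment stays bounded (again by the moment generating function), and convergence in probability of a
sequence bounded in `L²` implies convergence of the expectations.
-/

open MeasureTheory ProbabilityTheory Real Filter Set Topology
open scoped ENNReal NNReal

lemma mul_exp_one_sub_lt_one {x : ℝ} (hx : x ≠ 1) : x * exp (1 - x) < 1 := by
  have h := add_one_lt_exp (sub_ne_zero.mpr hx)
  calc x * exp (1 - x) < exp (x - 1) * exp (1 - x) := by gcongr; linarith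
    _ = 1 := by rw [← exp_add]; simp

lemma one_div_one_sub_le_exp_two_mul {u : ℝ} (hu0 : 0 ≤ u) (hu : u ≤ 1 / 2) :
    1 / (1 - u) ≤ exp (2 * u) := by
  rw [div_le_iff₀ (by linarith)]
  nlinarith [mul_nonneg (sub_nonneg.mpr (add_one_le_exp (2 * u))) (by linarith : (0 : ℝ) ≤ 1 - u)]

lemma abs_one_add_mul_rpow_le_exp {P y : ℝ} (hP : 0 ≤ P) (hy : 0 ≤ y) (t : ℝ) :
    |(1 + P * y) ^ t| ≤ exp (|t| * P * y) := by
  have h1 : 1 ≤ 1 + P * y := le_add_of_nonneg_right (by positivity)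
  rw [abs_of_nonneg (by positivity), show |t| * P * y = P * y * |t| by ring, exp_mul]
  calc (1 + P * y) ^ t ≤ (1 + P * y) ^ |t| := rpow_le_rpow_of_exponent_le h1 (le_abs_self t)
    _ ≤ exp (P * y) ^ |t| := by
        gcongr
        linarith [add_one_le_exp (P * y)]

lemma abs_le_add_sq_div_add_ite {x δ R : ℝ} (hδ : 0 ≤ δ) (hR : 0 < R) :
    |x| ≤ δ + x ^ 2 / R + if δ ≤ |x| then R else 0 := by
  have hsq : 0 ≤ x ^ 2 / R := by positivity
  split_ifs with hx
  · rcases le_or_gt |x| R with h | h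
    · linarith
    · have : |x| ≤ x ^ 2 / R := by
        rw [le_div_iff₀ hR, ← sq_abs]; nlinarith [abs_nonneg x]
      linarith
  · linarith

lemma gammaPDFReal_mul_exp {a r c : ℝ} (hr : 0 < r) (hc : c < r) (x : ℝ) :
    gammaPDFReal a r x * exp (c * x) = (r / (r - c)) ^ a * gammaPDFReal a (r - c) x := by
  have hrc : 0 < r - c := sub_pos.mpr hc
  have hexp : exp (-(r * x)) * exp (c * x) = exp (-((r - c) * x)) := by
    rw [← exp_add]; ring_nf
  unfold gammaPDFReal
  split_ifs
  · rw [div_rpow hr.le hrc.le, ← hexp]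
    have : (r - c) ^ a ≠ 0 := (rpow_pos_of_pos hrc a).ne'
    field_simp
  · simp

lemma lintegral_exp_mul_gammaMeasure {a r c : ℝ} (ha : 0 < a) (hr : 0 < r) (hc : c < r) :
    ∫⁻ x, ENNReal.ofReal (exp (c * x)) ∂gammaMeasure a r = ENNReal.ofReal ((r / (r - c)) ^ a) := by
  have hpdf : Measurable (gammaPDF a r) := (measurable_gammaPDFReal a r).ennreal_ofReal
  rw [gammaMeasure, lintegral_withDensity_eq_lintegral_mul _ hpdf (by fun_prop)]
  simp_rw [Pi.mul_apply, gammaPDF, ← ENNReal.ofReal_mul (gammaPDFReal_nonneg ha hr _),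
    gammaPDFReal_mul_exp hr hc, ENNReal.ofReal_mul (by positivity : (0:ℝ) ≤ (r / (r - c)) ^ a)]
  rw [lintegral_const_mul _ (measurable_gammaPDFReal a _).ennreal_ofReal,
    show ∫⁻ x, ENNReal.ofReal (gammaPDFReal a (r - c) x) = 1 from
      lintegral_gammaPDF_eq_one ha (sub_pos.mpr hc), mul_one]

lemma lintegral_exp_mul_div_gammaMeasure_le {a c : ℝ} (ha : 0 < a) (hc : 0 ≤ c) (hca : 2 * c ≤ a) :
    ∫⁻ z, ENNReal.ofReal (exp (c * (z / a))) ∂gammaMeasure a 1 ≤ ENNReal.ofReal (exp (2 * c)) := by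
  have hu : c / a ≤ 1 / 2 := by rw [div_le_iff₀ ha]; linarith
  simp_rw [show ∀ z, c * (z / a) = c / a * z from fun z => by ring]
  rw [lintegral_exp_mul_gammaMeasure ha one_pos (by linarith)]
  refine ENNReal.ofReal_le_ofReal ?_
  calc (1 / (1 - c / a)) ^ a ≤ exp (2 * (c / a)) ^ a := by
        gcongr
        · exact one_div_nonneg.mpr (by linarith)
        · exact one_div_one_sub_le_exp_two_mul (by positivity) hu
    _ = exp (2 * c) := by rw [← exp_mul]; congr 1; field_simp

lemma gammaMeasure_Iio_zero (a r : ℝ) : gammaMeasure a r (Iio 0) = 0 := by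
  rw [gammaMeasure, withDensity_apply _ measurableSet_Iio]
  exact lintegral_gammaPDF_of_nonpos le_rfl

lemma ae_nonneg_gammaMeasure (a r : ℝ) : ∀ᵐ x ∂gammaMeasure a r, 0 ≤ x := by
  rw [ae_iff]
  simp only [not_le]
  exact gammaMeasure_Iio_zero a r

lemma gammaMeasure_setOf_le_mul_le {a r c : ℝ} (ha : 0 < a) (hr : 0 < r) (hc : c < r) (t : ℝ) :
    gammaMeasure a r {x | t ≤ c * x} ≤ ENNReal.ofReal (exp (-t) * (r / (r - c)) ^ a) := by
  calc gammaMeasure a r {x | t ≤ c * x}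
      = ∫⁻ x, {x | t ≤ c * x}.indicator 1 x ∂gammaMeasure a r :=
        (lintegral_indicator_one (measurableSet_le measurable_const (by fun_prop))).symm
    _ ≤ ∫⁻ x, ENNReal.ofReal (exp (-t)) * ENNReal.ofReal (exp (c * x)) ∂gammaMeasure a r := by
        refine lintegral_mono fun x => ?_
        rw [← ENNReal.ofReal_mul (exp_pos _).le, ← exp_add]
        by_cases hx : t ≤ c * x
        · simpa [indicator_of_mem (show x ∈ {x | t ≤ c * x} from hx)] using by linarith
        · simp [indicator_of_notMem (show x ∉ {x | t ≤ c * x} from hx)]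
    _ = ENNReal.ofReal (exp (-t) * (r / (r - c)) ^ a) := by
        rw [lintegral_const_mul _ (by fun_prop), lintegral_exp_mul_gammaMeasure ha hr hc,
          ← ENNReal.ofReal_mul (exp_pos _).le]

/-- Chernoff's bound at the optimal parameter `c = 1 - x⁻¹`; the set is `Ici (x * a)` when
`1 ≤ x` and `Iic (x * a)` when `x ≤ 1`. -/
lemma gammaMeasure_setOf_le_one_sub_inv_mul_le {a x : ℝ} (ha : 0 < a) (hx : 0 < x) :
    gammaMeasure a 1 {z | (x - 1) * a ≤ (1 - x⁻¹) * z} ≤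
      ENNReal.ofReal ((x * exp (1 - x)) ^ a) := by
  refine (gammaMeasure_setOf_le_mul_le ha one_pos (by simpa using hx) _).trans_eq ?_
  rw [sub_sub_cancel, one_div, inv_inv, mul_rpow hx.le (exp_pos _).le, ← exp_mul, mul_comm]
  ring_nf

lemma gammaMeasure_Ici_mul_le {a x : ℝ} (ha : 0 < a) (hx : 1 ≤ x) :
    gammaMeasure a 1 (Ici (x * a)) ≤ ENNReal.ofReal ((x * exp (1 - x)) ^ a) := by
  have hx0 : 0 < x := by linarith
  refine (measure_mono fun z (hz : x * a ≤ z) => ?_).trans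
    (gammaMeasure_setOf_le_one_sub_inv_mul_le ha hx0)
  have h : 0 ≤ 1 - x⁻¹ := sub_nonneg.mpr (inv_le_one_of_one_le₀ hx)
  calc (x - 1) * a = (1 - x⁻¹) * (x * a) := by field_simp
    _ ≤ (1 - x⁻¹) * z := by gcongr

lemma gammaMeasure_Iic_mul_le {a x : ℝ} (ha : 0 < a) (hx0 : 0 < x) (hx : x ≤ 1) :
    gammaMeasure a 1 (Iic (x * a)) ≤ ENNReal.ofReal ((x * exp (1 - x)) ^ a) := by
  refine (measure_mono fun z (hz : z ≤ x * a) => ?_).trans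
    (gammaMeasure_setOf_le_one_sub_inv_mul_le ha hx0)
  have h : 1 - x⁻¹ ≤ 0 := sub_nonpos.mpr ((one_le_inv₀ hx0).mpr hx)
  calc (x - 1) * a = (1 - x⁻¹) * (x * a) := by field_simp
    _ ≤ (1 - x⁻¹) * z := mul_le_mul_of_nonpos_left hz h

lemma tendsto_gammaMeasure_setOf_le_abs_div_sub_one {ε : ℝ} (hε : 0 < ε) :
    Tendsto (fun n : ℕ => gammaMeasure n 1 {z | ε ≤ |z / n - 1|}) atTop (𝓝 0) := by
  wlog hε1 : ε < 1 generalizing ε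
  · refine tendsto_of_tendsto_of_tendsto_of_le_of_le tendsto_const_nhds
      (this (ε := 1 / 2) (by norm_num) (by norm_num)) (fun _ => zero_le) fun n => ?_
    exact measure_mono fun z (hz : ε ≤ |z / n - 1|) => show 1 / 2 ≤ |z / n - 1| by linarith
  have hq {x : ℝ} (hx0 : 0 ≤ x) (hx : x ≠ 1) :
      Tendsto (fun n : ℕ => ENNReal.ofReal ((x * exp (1 - x)) ^ n)) atTop (𝓝 0) := by
    simpa using ENNReal.tendsto_ofReal
      (tendsto_pow_atTop_nhds_zero_of_lt_one (by positivity) (mul_exp_one_sub_lt_one hx))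
  have hsum := (hq (x := 1 + ε) (by linarith) (ne_of_gt (by linarith))).add
    (hq (x := 1 - ε) (by linarith) (ne_of_lt (by linarith)))
  rw [add_zero] at hsum
  refine tendsto_of_tendsto_of_tendsto_of_le_of_le' tendsto_const_nhds hsum
    (Eventually.of_forall fun _ => zero_le) ?_
  filter_upwards [eventually_gt_atTop 0] with n hn
  have hn' : (0 : ℝ) < n := Nat.cast_pos.mpr hn
  calc gammaMeasure n 1 {z | ε ≤ |z / n - 1|}
      ≤ gammaMeasure n 1 (Ici ((1 + ε) * n) ∪ Iic ((1 - ε) * n)) := by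
        refine measure_mono fun z (hz : ε ≤ |z / n - 1|) => ?_
        rcases le_abs'.mp hz with h | h
        · exact Or.inr ((div_le_iff₀ hn').mp (by linarith))
        · exact Or.inl ((le_div_iff₀ hn').mp (by linarith))
    _ ≤ gammaMeasure n 1 (Ici ((1 + ε) * n)) + gammaMeasure n 1 (Iic ((1 - ε) * n)) :=
        measure_union_le _ _
    _ ≤ _ := by
        rw [← rpow_natCast, ← rpow_natCast]
        exact add_le_add (gammaMeasure_Ici_mul_le hn' (by linarith))
          (gammaMeasure_Iic_mul_le hn' (by linarith) (by linarith))

section InMeasure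

variable {α ι κ E : Type*} [MeasurableSpace α] {μ : Measure α} {l : Filter ι}

lemma MeasureTheory.TendstoInMeasure.of_forall_exists_eq [EDist E] [Fintype κ]
    {f : κ → ι → α → E} {F : ι → α → E} {g : α → E} (hf : ∀ k, TendstoInMeasure μ (f k) l g)
    (hF : ∀ i x, ∃ k, F i x = f k i x) : TendstoInMeasure μ F l g := by
  intro ε hε
  refine tendsto_of_tendsto_of_tendsto_of_le_of_le tendsto_const_nhds
    (by simpa using tendsto_finsetSum Finset.univ fun k _ => hf k ε hε)
    (fun _ => zero_le) fun i => ?_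
  refine (measure_mono fun x (hx : ε ≤ edist (F i x) (g x)) => ?_).trans
    (measure_iUnion_fintype_le μ fun k => {x | ε ≤ edist (f k i x) (g x)})
  obtain ⟨k, hk⟩ := hF i x
  exact mem_iUnion.mpr ⟨k, by rwa [hk] at hx⟩

lemma MeasureTheory.TendstoInMeasure.comp_continuousAt {F : Type*} [PseudoMetricSpace E]
    [PseudoMetricSpace F] {f : ι → α → E} {c : E} {φ : E → F}
    (hf : TendstoInMeasure μ f l fun _ => c) (hφ : ContinuousAt φ c) :
    TendstoInMeasure μ (fun i x => φ (f i x)) l fun _ => φ c := by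
  rw [tendstoInMeasure_iff_dist] at hf ⊢
  intro ε hε
  obtain ⟨η, hη, hφη⟩ := Metric.continuousAt_iff.mp hφ ε hε
  refine tendsto_of_tendsto_of_tendsto_of_le_of_le tendsto_const_nhds (hf η hη)
    (fun _ => zero_le) fun i => measure_mono fun x (hx : ε ≤ dist (φ (f i x)) (φ c)) => ?_
  exact le_of_not_gt fun h => (hφη h).not_ge hx

lemma abs_integral_sub_le_of_lintegral_sq_le [IsProbabilityMeasure μ] {f : α → ℝ} {B : ℝ≥0}
    (hf : AEStronglyMeasurable f μ) (hB : ∫⁻ x, ENNReal.ofReal (f x ^ 2) ∂μ ≤ B) (c : ℝ)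
    {δ R : ℝ} (hδ : 0 ≤ δ) (hR : 0 < R) :
    |∫ x, f x ∂μ - c| ≤ δ + (2 * B + 2 * c ^ 2) / R + μ.real {x | δ ≤ dist (f x) c} * R := by
  set A := {x | δ ≤ dist (f x) c}
  have hA : NullMeasurableSet A μ :=
    aestronglyMeasurable_const.nullMeasurableSet_le ((hf.sub aestronglyMeasurable_const).norm)
  have hsq_int : Integrable (fun x => f x ^ 2) μ :=
    ⟨hf.pow 2, (hasFiniteIntegral_iff_ofReal (ae_of_all _ fun x => sq_nonneg _)).mpr
      (hB.trans_lt ENNReal.coe_lt_top)⟩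
  have hL2 : MemLp f 2 μ := (memLp_two_iff_integrable_sq hf).mpr hsq_int
  have hdev_int : Integrable (fun x => (f x - c) ^ 2) μ :=
    (memLp_two_iff_integrable_sq (hf.sub aestronglyMeasurable_const)).mp (hL2.sub (memLp_const c))
  have hsq_le : ∫ x, f x ^ 2 ∂μ ≤ B := by
    rw [integral_eq_lintegral_of_nonneg_ae (ae_of_all _ fun x => sq_nonneg _) (hf.pow 2)]
    exact ENNReal.toReal_le_of_le_ofReal B.coe_nonneg (by simpa using hB)
  have hdev_le : ∫ x, (f x - c) ^ 2 ∂μ ≤ 2 * B + 2 * c ^ 2 := calc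
    ∫ x, (f x - c) ^ 2 ∂μ ≤ ∫ x, (2 * f x ^ 2 + 2 * c ^ 2) ∂μ :=
        integral_mono hdev_int ((hsq_int.const_mul 2).add (integrable_const _))
          fun x => by nlinarith [sq_nonneg (f x + c)]
    _ = 2 * ∫ x, f x ^ 2 ∂μ + 2 * c ^ 2 := by
        rw [integral_add (hsq_int.const_mul 2) (integrable_const _), integral_const_mul,
          integral_const, probReal_univ, one_smul]
    _ ≤ 2 * B + 2 * c ^ 2 := by linarith
  have hdom_int : Integrable (fun x => δ + (f x - c) ^ 2 / R) μ :=
    (integrable_const _).add (hdev_int.div_const R)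
  have hind_int : Integrable (fun x => A.indicator (fun _ => R) x) μ :=
    (integrable_const R).indicator₀ hA
  calc |∫ x, f x ∂μ - c| = |∫ x, (f x - c) ∂μ| := by
        rw [integral_sub (hL2.integrable one_le_two) (integrable_const c), integral_const,
          probReal_univ, one_smul]
    _ ≤ ∫ x, |f x - c| ∂μ := abs_integral_le_integral_abs
    _ ≤ ∫ x, (δ + (f x - c) ^ 2 / R + A.indicator (fun _ => R) x) ∂μ := by
        refine integral_mono ((hL2.integrable one_le_two).sub (integrable_const c)).abs
          (hdom_int.add hind_int) fun x => ?_
        simp only [indicator_apply, A, Real.dist_eq]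
        exact abs_le_add_sq_div_add_ite hδ hR
    _ = δ + (∫ x, (f x - c) ^ 2 ∂μ) / R + μ.real A * R := by
        rw [integral_add hdom_int hind_int, integral_add (integrable_const _)
            (hdev_int.div_const R), integral_const, probReal_univ, one_smul, integral_div,
          integral_indicator₀ hA, setIntegral_const, smul_eq_mul]
    _ ≤ δ + (2 * B + 2 * c ^ 2) / R + μ.real A * R := by gcongr

lemma tendsto_integral_of_tendstoInMeasure_of_lintegral_sq_le [IsProbabilityMeasure μ]
    {f : ι → α → ℝ} {c : ℝ} {B : ℝ≥0} (hf : ∀ i, AEStronglyMeasurable (f i) μ)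
    (hfc : TendstoInMeasure μ f l fun _ => c)
    (hB : ∀ᶠ i in l, ∫⁻ x, ENNReal.ofReal (f i x ^ 2) ∂μ ≤ B) :
    Tendsto (fun i => ∫ x, f i x ∂μ) l (𝓝 c) := by
  rw [Metric.tendsto_nhds]
  intro δ hδ
  set R : ℝ := 3 * (2 * B + 2 * c ^ 2) / δ + 1
  have hR : 0 < R := by positivity
  have hR_big : (2 * B + 2 * c ^ 2) / R < δ / 3 := by
    rw [div_lt_iff₀ hR]
    have : 3 * (2 * B + 2 * c ^ 2) / δ * (δ / 3) = 2 * B + 2 * c ^ 2 := by field_simp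
    nlinarith
  have hsmall := (tendstoInMeasure_iff_measureReal_dist.mp hfc (δ / 3) (by positivity)).eventually
    (gt_mem_nhds (show 0 < δ / 3 / R by positivity))
  filter_upwards [hB, hsmall] with i hBi hAi
  have h := abs_integral_sub_le_of_lintegral_sq_le (hf i) hBi c (by positivity : 0 ≤ δ / 3) hR
  have hAR := (lt_div_iff₀ hR).mp hAi
  rw [Real.dist_eq]
  linarith

end InMeasure

section GammaSamples

variable {Ω κ : Type*} [MeasurableSpace Ω] {μ : Measure Ω}

lemma tendstoInMeasure_div_of_map_eq_gammaMeasure {Z : ℕ → Ω → ℝ} (hZ : ∀ n, Measurable (Z n))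
    (hdist : ∀ n, 1 ≤ n → μ.map (Z n) = gammaMeasure n 1) :
    TendstoInMeasure μ (fun n ω => Z n ω / n) atTop fun _ => 1 := by
  rw [tendstoInMeasure_iff_dist]
  intro ε hε
  refine (tendsto_gammaMeasure_setOf_le_abs_div_sub_one hε).congr' ?_
  filter_upwards [eventually_ge_atTop 1] with n hn
  rw [← hdist n hn, Measure.map_apply (hZ n) (measurableSet_le measurable_const (by fun_prop))]
  rfl

variable [Fintype κ] [Nonempty κ] {X : ℕ → κ → Ω → ℝ}

lemma tendstoInMeasure_iInf_div_of_map_eq_gammaMeasure (hX : ∀ n k, Measurable (X n k))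
    (hdist : ∀ n, 1 ≤ n → ∀ k, μ.map (X n k) = gammaMeasure n 1) :
    TendstoInMeasure μ (fun n ω => (⨅ k, X n k ω) / n) atTop fun _ => 1 :=
  TendstoInMeasure.of_forall_exists_eq
    (fun k => tendstoInMeasure_div_of_map_eq_gammaMeasure (hX · k) fun n hn => hdist n hn k)
    fun n ω => (exists_eq_ciInf_of_finite (f := fun k => X n k ω)).imp fun _ hk => by rw [← hk]

lemma eventually_lintegral_sq_comp_iInf_div_le (hX : ∀ n k, Measurable (X n k))
    (hdist : ∀ n, 1 ≤ n → ∀ k, μ.map (X n k) = gammaMeasure n 1) {φ : ℝ → ℝ} {b : ℝ} (hb : 0 ≤ b)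
    (hφ : ∀ y, 0 ≤ y → |φ y| ≤ exp (b * y)) :
    ∀ᶠ n : ℕ in atTop,
      ∫⁻ ω, ENNReal.ofReal (φ ((⨅ k, X n k ω) / n) ^ 2) ∂μ ≤ ENNReal.ofReal (exp (4 * b)) := by
  obtain ⟨k₀⟩ := ‹Nonempty κ›
  filter_upwards [eventually_ge_atTop 1, tendsto_natCast_atTop_atTop.eventually_ge_atTop (4 * b)]
    with n hn hnb
  have hn' : (0 : ℝ) < n := by exact_mod_cast hn
  have hnonneg : ∀ᵐ ω ∂μ, ∀ k, 0 ≤ X n k ω := ae_all_iff.mpr fun k =>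
    ae_of_ae_map (hX n k).aemeasurable (by rw [hdist n hn k]; exact ae_nonneg_gammaMeasure _ _)
  calc ∫⁻ ω, ENNReal.ofReal (φ ((⨅ k, X n k ω) / n) ^ 2) ∂μ
      ≤ ∫⁻ ω, ENNReal.ofReal (exp (2 * b * (X n k₀ ω / n))) ∂μ := by
        refine lintegral_mono_ae (hnonneg.mono fun ω hω => ENNReal.ofReal_le_ofReal ?_)
        have hmin : ⨅ k, X n k ω ≤ X n k₀ ω := ciInf_le (Finite.bddBelow_range _) k₀
        have hY : 0 ≤ (⨅ k, X n k ω) / n := div_nonneg (le_ciInf hω) hn'.le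
        calc φ ((⨅ k, X n k ω) / n) ^ 2 = |φ ((⨅ k, X n k ω) / n)| ^ 2 := (sq_abs _).symm
          _ ≤ exp (b * ((⨅ k, X n k ω) / n)) ^ 2 := by gcongr; exact hφ _ hY
          _ = exp (2 * b * ((⨅ k, X n k ω) / n)) := by rw [← exp_nat_mul]; ring_nf
          _ ≤ exp (2 * b * (X n k₀ ω / n)) := by gcongr
    _ = ∫⁻ z, ENNReal.ofReal (exp (2 * b * (z / n))) ∂gammaMeasure n 1 := by
        rw [← hdist n hn k₀, lintegral_map (by fun_prop) (hX n k₀)]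
    _ ≤ ENNReal.ofReal (exp (4 * b)) := by
        rw [show 4 * b = 2 * (2 * b) by ring]
        exact lintegral_exp_mul_div_gammaMeasure_le hn' (by positivity) (by linarith)

end GammaSamples

theorem mellin_fixed_users_many_antennas_limit_general {Ω : Type*} [MeasureSpace Ω]
    [IsProbabilityMeasure (ℙ : Measure Ω)]
    (K : ℕ) (hK : 1 ≤ K) (P : ℝ) (hP : 0 < P) (s : ℝ)
    (X : ℕ → Fin K → Ω → ℝ)
    (hmeas : ∀ M k, Measurable (X M k))
    (hdist : ∀ M, 1 ≤ M → ∀ k, Measure.map (X M k) ℙ = gammaMeasure M 1) :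
    Tendsto
      (fun M : ℕ => ∫ ω, (1 + P / M * ⨅ k : Fin K, X M k ω) ^ (s - 1) ∂ℙ)
      atTop (nhds ((1 + P) ^ (s - 1))) := by
  have : Nonempty (Fin K) := ⟨⟨0, hK⟩⟩
  have hφ : ContinuousAt (fun y => (1 + P * y) ^ (s - 1)) 1 :=
    (by fun_prop : ContinuousAt (fun y => 1 + P * y) 1).rpow_const (Or.inl (by positivity))
  have hconv :=
    (tendstoInMeasure_iInf_div_of_map_eq_gammaMeasure hmeas hdist).comp_continuousAt hφ
  have hbound := eventually_lintegral_sq_comp_iInf_div_le hmeas hdist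
    (by positivity : 0 ≤ |s - 1| * P) fun y hy => abs_one_add_mul_rpow_le_exp hP.le hy (s - 1)
  have h := tendsto_integral_of_tendstoInMeasure_of_lintegral_sq_le
    (B := (exp (4 * (|s - 1| * P))).toNNReal)
    (fun M => Measurable.aestronglyMeasurable (by have := hmeas M; fun_prop)) hconv hbound
  rw [mul_one] at h
  refine h.congr fun M => ?_
  simp_rw [div_mul_eq_mul_div, mul_div_assoc]

/-- Scaling with finite `K` and increasing `M`: for each `M ≥ 1` let `X_(1)^(M)` be the
minimum of `K` i.i.d. `Gamma(M,1)` random variables. Then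
`E[(1 + (P/M) X_(1)^(M))^(s-1)] → (1+P)^(s-1)` as `M → ∞`. -/
theorem mellin_fixed_users_many_antennas_limit {Ω : Type*} [MeasureSpace Ω]
    [IsProbabilityMeasure (ℙ : Measure Ω)]
    (K : ℕ) (hK : 1 ≤ K) (P : ℝ) (hP : 0 < P) (s : ℝ)
    (X : ℕ → Fin K → Ω → ℝ)
    (hmeas : ∀ M k, Measurable (X M k))
    (hindep : ∀ M, iIndepFun (X M) ℙ)
    (hdist : ∀ M, 1 ≤ M → ∀ k, Measure.map (X M k) ℙ = gammaMeasure M 1) :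
    Tendsto
      (fun M : ℕ => ∫ ω, (1 + P / M * ⨅ k : Fin K, X M k ω) ^ (s - 1) ∂ℙ)
      atTop (nhds ((1 + P) ^ (s - 1))) :=
  mellin_fixed_users_many_antennas_limit_general K hK P hP s X hmeas hdist
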